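/- (Existence and uniqueness of the Janet completion.) Let n ≥ 1 and M ⊂ (ℤ_{≥0})^n be a finite set of multi-indices. Write ⟨M⟩ := { α + β : α ∈ M, β ∈ (ℤ_{≥0})^n } for the monoid ideal generated by M, and for a finite set N write [N] := ⋃_{α∈N} C_N(α), where C_N(α) is the Janet cone of α with respect to N. Call a finite set N Janet complete if [N] = ⟨N⟩. Then there exists a finite Janet complete set M* with M ⊆ M* ⊆ ⟨M⟩ that is the unique smallest such set: M* ⊆ M' for every finite Janet complete set M' with M ⊆ M' ⊆ ⟨M⟩. -/

import Mathlib

/-- The index `k` is multiplicative for the multi-index `α` with respect to the finite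
set `N` of multi-indices (Janet division). -/
def IsMultiplicative {n : ℕ} (N : Finset (Fin n → ℕ)) (α : Fin n → ℕ) (k : Fin n) :
    Prop :=
  α k = (N.filter fun α' => ∀ j : Fin n, j < k → α' j = α j).sup fun α' => α' k

/-- The Janet cone of `α` with respect to `N`. -/
def janetCone {n : ℕ} (N : Finset (Fin n → ℕ)) (α : Fin n → ℕ) : Set (Fin n → ℕ) :=
  {γ | ∃ β : Fin n → ℕ, γ = α + β ∧ ∀ k : Fin n, ¬ IsMultiplicative N α k → β k = 0}

/-- The monoid ideal `⟨N⟩` generated by `N` in `(ℤ_{≥0})^n`. -/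
def monIdeal {n : ℕ} (N : Finset (Fin n → ℕ)) : Set (Fin n → ℕ) :=
  {γ | ∃ α ∈ N, ∃ β : Fin n → ℕ, γ = α + β}

/-- `[N]`, the union of the Janet cones of the elements of `N`. -/
def janetSpan {n : ℕ} (N : Finset (Fin n → ℕ)) : Set (Fin n → ℕ) :=
  ⋃ α ∈ N, janetCone N α

/-- `N` is Janet complete if `[N] = ⟨N⟩`. -/
def JanetComplete {n : ℕ} (N : Finset (Fin n → ℕ)) : Prop :=
  janetSpan N = monIdeal N

/-!
Slicing by the first coordinate reduces everything to one dimension less: `(b, t)` lies in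
the Janet span of `N` iff `t` lies in the Janet span of the slice of `N` at height `min b A`,
where `A` is the largest first coordinate in `N`, and it lies in `⟨G⟩` iff `t` lies in the ideal
generated by the tails of the generators of height at most `b`. Hence `[N] = ⟨G⟩` iff the slice
of `N` at each height `b ≤ A` has Janet span the ideal at height `b`, and the ideals no longer
grow from height `A` on. The least such `N` containing a given `R ⊆ ⟨G⟩` takes `A` as small as
possible and stacks the least such sets for the slices, which exist by induction on the
dimension.
-/

open Finset

section

variable {n : ℕ}

lemma mem_monIdeal_iff {N : Finset (Fin n → ℕ)} {γ : Fin n → ℕ} :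
    γ ∈ monIdeal N ↔ ∃ α ∈ N, α ≤ γ := by
  constructor
  · rintro ⟨α, hα, β, rfl⟩
    exact ⟨α, hα, le_self_add⟩
  · rintro ⟨α, hα, hle⟩
    exact ⟨α, hα, γ - α, (add_tsub_cancel_of_le hle).symm⟩

lemma monIdeal_eq_of_subset {M N : Finset (Fin n → ℕ)} (hMN : M ⊆ N)
    (hN : ↑N ⊆ monIdeal M) : monIdeal N = monIdeal M := by
  ext γ
  simp only [mem_monIdeal_iff]
  constructor
  · rintro ⟨α, hα, hαγ⟩
    obtain ⟨μ, hμ, hμα⟩ := mem_monIdeal_iff.1 (hN hα)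
    exact ⟨μ, hμ, hμα.trans hαγ⟩
  · rintro ⟨μ, hμ, hμγ⟩
    exact ⟨μ, hMN hμ, hμγ⟩

lemma subset_janetSpan (N : Finset (Fin n → ℕ)) : ↑N ⊆ janetSpan N := fun α hα =>
  Set.mem_biUnion hα ⟨0, (add_zero α).symm, fun _ _ => rfl⟩

lemma nonempty_of_janetSpan_nonempty {N : Finset (Fin n → ℕ)} (h : (janetSpan N).Nonempty) :
    N.Nonempty := by
  obtain ⟨γ, hγ⟩ := h
  obtain ⟨α, hα, -⟩ := Set.mem_iUnion₂.1 hγ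
  exact ⟨α, hα⟩

lemma janetSpan_fin_zero (N : Finset (Fin 0 → ℕ)) : janetSpan N = N := by
  refine Set.Subset.antisymm (fun γ hγ => ?_) (subset_janetSpan N)
  obtain ⟨α, hα, -⟩ := Set.mem_iUnion₂.1 hγ
  exact Subsingleton.elim α γ ▸ hα

lemma monIdeal_fin_zero (G : Finset (Fin 0 → ℕ)) : monIdeal G = G := by
  ext γ
  rw [mem_monIdeal_iff]
  exact ⟨fun ⟨α, hα, _⟩ => Subsingleton.elim α γ ▸ hα, fun h => ⟨γ, h, le_rfl⟩⟩

def janetBases (R G : Finset (Fin n → ℕ)) : Set (Finset (Fin n → ℕ)) :=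
  {N | R ⊆ N ∧ janetSpan N = monIdeal G}

lemma isLeast_janetBases_fin_zero {R G : Finset (Fin 0 → ℕ)} (hR : ↑R ⊆ monIdeal G) :
    IsLeast (janetBases R G) G := by
  rw [monIdeal_fin_zero, coe_subset] at hR
  refine ⟨⟨hR, by rw [janetSpan_fin_zero, monIdeal_fin_zero]⟩, fun N ⟨_, hN⟩ => ?_⟩
  rw [janetSpan_fin_zero, monIdeal_fin_zero, coe_inj] at hN
  exact hN.ge

lemma isLeast_janetBases_empty : IsLeast (janetBases ∅ (∅ : Finset (Fin n → ℕ))) ∅ :=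
  ⟨⟨subset_rfl, by simp [janetSpan, monIdeal]⟩, fun _ _ => empty_subset _⟩

def headSlice (N : Finset (Fin (n + 1) → ℕ)) (b : ℕ) : Finset (Fin n → ℕ) :=
  (N.filter (· 0 = b)).image Fin.tail

def headSliceLE (G : Finset (Fin (n + 1) → ℕ)) (b : ℕ) : Finset (Fin n → ℕ) :=
  (G.filter (· 0 ≤ b)).image Fin.tail

lemma mem_headSlice {N : Finset (Fin (n + 1) → ℕ)} {b : ℕ} {t : Fin n → ℕ} :
    t ∈ headSlice N b ↔ Fin.cons b t ∈ N := by
  simp only [headSlice, mem_image, mem_filter]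
  constructor
  · rintro ⟨α, ⟨hα, rfl⟩, rfl⟩
    rwa [Fin.cons_self_tail]
  · exact fun h => ⟨_, ⟨h, Fin.cons_zero _ _⟩, Fin.tail_cons _ _⟩

lemma mem_monIdeal_headSliceLE_iff {G : Finset (Fin (n + 1) → ℕ)} {b : ℕ}
    {t : Fin n → ℕ} :
    t ∈ monIdeal (headSliceLE G b) ↔ Fin.cons b t ∈ monIdeal G := by
  simp only [mem_monIdeal_iff, headSliceLE, exists_mem_image, mem_filter, Fin.le_cons,
    and_assoc]

lemma headSliceLE_of_sup_le {G : Finset (Fin (n + 1) → ℕ)} {b : ℕ} (h : G.sup (· 0) ≤ b) :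
    headSliceLE G b = G.image Fin.tail := by
  rw [headSliceLE, filter_true_of_mem fun g hg => (le_sup (f := (· 0)) hg).trans h]

lemma isMultiplicative_zero_iff {N : Finset (Fin (n + 1) → ℕ)} {α : Fin (n + 1) → ℕ} :
    IsMultiplicative N α 0 ↔ α 0 = N.sup (· 0) := by
  rw [IsMultiplicative, filter_true_of_mem fun _ _ j hj => absurd hj (Fin.not_lt_zero j)]

lemma isMultiplicative_succ_iff {N : Finset (Fin (n + 1) → ℕ)} {α : Fin (n + 1) → ℕ}
    {k : Fin n} :
    IsMultiplicative N α k.succ ↔ IsMultiplicative (headSlice N (α 0)) (Fin.tail α) k := by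
  have hprefix : ∀ α' : Fin (n + 1) → ℕ, (∀ j < k.succ, α' j = α j) ↔
      α' 0 = α 0 ∧ ∀ j < k, Fin.tail α' j = Fin.tail α j := fun α' => by
    simp only [Fin.forall_fin_succ, Fin.succ_lt_succ_iff, Fin.succ_pos, true_implies, Fin.tail]
  rw [IsMultiplicative, IsMultiplicative, headSlice, filter_image, sup_image, filter_filter]
  simp only [hprefix]
  rfl

lemma cons_mem_janetCone_cons_iff {N : Finset (Fin (n + 1) → ℕ)} {a b : ℕ}
    {s t : Fin n → ℕ} :
    Fin.cons b t ∈ janetCone N (Fin.cons a s) ↔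
      a ≤ b ∧ (a = N.sup (· 0) ∨ b = a) ∧ t ∈ janetCone (headSlice N a) s := by
  have hmult (k : Fin n) :
      IsMultiplicative N (Fin.cons a s) k.succ ↔ IsMultiplicative (headSlice N a) s k := by
    rw [isMultiplicative_succ_iff, Fin.cons_zero, Fin.tail_cons]
  have hadd (c : ℕ) (v : Fin n → ℕ) :
      (Fin.cons a s + Fin.cons c v : Fin (n + 1) → ℕ) = Fin.cons (a + c) (s + v) :=
    Matrix.cons_add_cons a s c v
  simp only [janetCone, Set.mem_ofPred_eq, Fin.exists_fin_succ_pi, Fin.forall_fin_succ, hadd,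
    Fin.cons_inj, Fin.cons_zero, Fin.cons_succ, hmult, isMultiplicative_zero_iff]
  constructor
  · rintro ⟨c, v, ⟨rfl, rfl⟩, hc, hv⟩
    refine ⟨Nat.le_add_right a c, ?_, v, rfl, hv⟩
    by_cases h : a = N.sup (· 0)
    · exact Or.inl h
    · simp [hc h]
  · rintro ⟨hab, hor, v, rfl, hv⟩
    exact ⟨b - a, v, ⟨by omega, rfl⟩, fun h => by omega, hv⟩

lemma cons_mem_janetSpan_iff {N : Finset (Fin (n + 1) → ℕ)} {b : ℕ} {t : Fin n → ℕ} :
    Fin.cons b t ∈ janetSpan N ↔ t ∈ janetSpan (headSlice N (min b (N.sup (· 0)))) := by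
  simp only [janetSpan, Set.mem_iUnion₂, mem_headSlice, Fin.exists_fin_succ_pi,
    cons_mem_janetCone_cons_iff]
  constructor
  · rintro ⟨a, s, hN, hab, hor, ht⟩
    have hmax : a ≤ N.sup (· 0) := le_sup (f := (· 0)) hN
    obtain rfl : min b (N.sup (· 0)) = a := by
      rcases hor with rfl | rfl
      · exact min_eq_right hab
      · exact min_eq_left hmax
    exact ⟨s, hN, ht⟩
  · rintro ⟨s, hN, ht⟩
    refine ⟨_, s, hN, min_le_left _ _, ?_, ht⟩
    rcases min_cases b (N.sup (· 0)) with ⟨h, -⟩ | ⟨h, -⟩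
    · exact Or.inr h.symm
    · exact Or.inl h

theorem janetSpan_eq_monIdeal_iff {N G : Finset (Fin (n + 1) → ℕ)} :
    janetSpan N = monIdeal G ↔
      ∀ b, janetSpan (headSlice N (min b (N.sup (· 0)))) = monIdeal (headSliceLE G b) := by
  simp only [Set.ext_iff, Fin.forall_fin_succ_pi, cons_mem_janetSpan_iff,
    mem_monIdeal_headSliceLE_iff]

def stackSlices (A : ℕ) (F : ℕ → Finset (Fin n → ℕ)) : Finset (Fin (n + 1) → ℕ) :=
  (range (A + 1)).biUnion fun b => (F b).image (Fin.cons b)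

lemma cons_mem_stackSlices {A b : ℕ} {F : ℕ → Finset (Fin n → ℕ)} {t : Fin n → ℕ} :
    Fin.cons b t ∈ stackSlices A F ↔ b ≤ A ∧ t ∈ F b := by
  simp [stackSlices, Fin.cons_inj]

lemma headSlice_stackSlices {A b : ℕ} {F : ℕ → Finset (Fin n → ℕ)} (h : b ≤ A) :
    headSlice (stackSlices A F) b = F b := by
  ext t
  simp [mem_headSlice, cons_mem_stackSlices, h]

lemma sup_stackSlices {A : ℕ} {F : ℕ → Finset (Fin n → ℕ)} (h : (F A).Nonempty) :
    (stackSlices A F).sup (· 0) = A := by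
  refine le_antisymm (Finset.sup_le fun x hx => ?_) ?_
  · rw [← Fin.cons_self_tail x, cons_mem_stackSlices] at hx
    exact hx.1
  · obtain ⟨t, ht⟩ := h
    exact le_sup (f := (· 0)) (cons_mem_stackSlices.2 ⟨le_rfl, ht⟩)

def IsSliceBound (R G : Finset (Fin (n + 1) → ℕ)) (A : ℕ) : Prop :=
  (∀ r ∈ R, r 0 ≤ A) ∧
    ∀ c, A ≤ c → monIdeal (headSliceLE G c) = monIdeal (headSliceLE G A)

lemma exists_isSliceBound (R G : Finset (Fin (n + 1) → ℕ)) : ∃ A, IsSliceBound R G A := by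
  refine ⟨max (R.sup (· 0)) (G.sup (· 0)),
    fun r hr => (le_sup (f := (· 0)) hr).trans (le_max_left _ _), fun c hc => ?_⟩
  rw [headSliceLE_of_sup_le ((le_max_right _ _).trans hc),
    headSliceLE_of_sup_le (le_max_right _ _)]

lemma isSliceBound_sup {R G N : Finset (Fin (n + 1) → ℕ)} (hN : N ∈ janetBases R G) :
    IsSliceBound R G (N.sup (· 0)) := by
  have hslices := janetSpan_eq_monIdeal_iff.1 hN.2
  refine ⟨fun r hr => le_sup (f := (· 0)) (hN.1 hr), fun c hc => ?_⟩
  rw [← hslices c, ← hslices (N.sup _), min_eq_right hc, min_self]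

lemma headSlice_mem_janetBases {R G N : Finset (Fin (n + 1) → ℕ)} {b : ℕ}
    (hN : N ∈ janetBases R G) (hb : b ≤ N.sup (· 0)) :
    headSlice N b ∈ janetBases (headSlice R b) (headSliceLE G b) :=
  ⟨fun _ ht => mem_headSlice.2 (hN.1 (mem_headSlice.1 ht)),
    by rw [← janetSpan_eq_monIdeal_iff.1 hN.2 b, min_eq_left hb]⟩

lemma stackSlices_mem_janetBases {R G : Finset (Fin (n + 1) → ℕ)} {A : ℕ}
    {F : ℕ → Finset (Fin n → ℕ)} (hG : G.Nonempty) (hA : IsSliceBound R G A)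
    (hF : ∀ b, F b ∈ janetBases (headSlice R b) (headSliceLE G b)) :
    stackSlices A F ∈ janetBases R G := by
  -- so that `A` is the height of the stack
  have hFA : (F A).Nonempty := by
    obtain ⟨g, hg⟩ := hG
    refine nonempty_of_janetSpan_nonempty ⟨Fin.tail g, ?_⟩
    rw [(hF A).2, ← hA.2 _ (le_max_left A (g 0)), mem_monIdeal_headSliceLE_iff]
    exact mem_monIdeal_iff.2 ⟨g, hg, Fin.le_cons.2 ⟨le_max_right _ _, le_rfl⟩⟩
  refine ⟨fun r hr => ?_, janetSpan_eq_monIdeal_iff.2 fun b => ?_⟩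
  · rw [← Fin.cons_self_tail r, cons_mem_stackSlices]
    exact ⟨hA.1 r hr, (hF _).1 (mem_headSlice.2 (by rwa [Fin.cons_self_tail]))⟩
  · rw [sup_stackSlices hFA, headSlice_stackSlices (min_le_right b A), (hF _).2]
    rcases le_total b A with h | h
    · rw [min_eq_left h]
    · rw [min_eq_right h, hA.2 b h]

lemma stackSlices_subset {R G N : Finset (Fin (n + 1) → ℕ)} {A : ℕ}
    {F : ℕ → Finset (Fin n → ℕ)} (hA : ∀ b, IsSliceBound R G b → A ≤ b)
    (hF : ∀ b, F b ∈ lowerBounds (janetBases (headSlice R b) (headSliceLE G b)))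
    (hN : N ∈ janetBases R G) : stackSlices A F ⊆ N := by
  have hAN : A ≤ N.sup (· 0) := hA _ (isSliceBound_sup hN)
  intro x hx
  rw [← Fin.cons_self_tail x, cons_mem_stackSlices] at hx
  rw [← Fin.cons_self_tail x, ← mem_headSlice]
  exact hF _ (headSlice_mem_janetBases hN (hx.1.trans hAN)) hx.2

theorem exists_isLeast_janetBases (R G : Finset (Fin n → ℕ)) (hR : ↑R ⊆ monIdeal G) :
    ∃ N, IsLeast (janetBases R G) N := by
  induction n with
  | zero => exact ⟨G, isLeast_janetBases_fin_zero hR⟩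
  | succ n ih =>
    classical
    rcases G.eq_empty_or_nonempty with rfl | hG
    · obtain rfl : R = ∅ :=
        coe_eq_empty.1 (Set.subset_empty_iff.1 (by simpa [monIdeal] using hR))
      exact ⟨∅, isLeast_janetBases_empty⟩
    choose F hF using fun b => ih (headSlice R b) (headSliceLE G b)
      fun _ ht => mem_monIdeal_headSliceLE_iff.2 (hR (mem_headSlice.1 ht))
    have hA := exists_isSliceBound R G
    exact ⟨stackSlices (Nat.find hA) F,
      stackSlices_mem_janetBases hG (Nat.find_spec hA) fun b => (hF b).1,
      fun N hN => stackSlices_subset (fun b => Nat.find_min' hA) (fun b => (hF b).2) hN⟩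

end

theorem janet_completion_exists_unique_general (n : ℕ) (M : Finset (Fin n → ℕ)) :
    ∃ Mstar : Finset (Fin n → ℕ),
      M ⊆ Mstar ∧ ↑Mstar ⊆ monIdeal M ∧ JanetComplete Mstar ∧
        ∀ M' : Finset (Fin n → ℕ), M ⊆ M' → ↑M' ⊆ monIdeal M → JanetComplete M' →
          Mstar ⊆ M' := by
  obtain ⟨N, ⟨hMN, hN⟩, hleast⟩ :=
    exists_isLeast_janetBases M M fun α hα => mem_monIdeal_iff.2 ⟨α, hα, le_rfl⟩
  have hNM : ↑N ⊆ monIdeal M := hN ▸ subset_janetSpan N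
  refine ⟨N, hMN, hNM, ?_, fun M' hMM' hM'M hM' => hleast ⟨hMM', ?_⟩⟩
  · rw [JanetComplete, hN, monIdeal_eq_of_subset hMN hNM]
  · exact hM'.trans (monIdeal_eq_of_subset hMM' hM'M)

/-- **Existence and uniqueness of the Janet completion**: every finite set `M` of
multi-indices has a unique smallest finite Janet complete superset contained in `⟨M⟩`. -/
theorem janet_completion_exists_unique (n : ℕ) (hn : 1 ≤ n) (M : Finset (Fin n → ℕ)) :
    ∃ Mstar : Finset (Fin n → ℕ),
      M ⊆ Mstar ∧ ↑Mstar ⊆ monIdeal M ∧ JanetComplete Mstar ∧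
        ∀ M' : Finset (Fin n → ℕ), M ⊆ M' → ↑M' ⊆ monIdeal M → JanetComplete M' →
          Mstar ⊆ M' :=
  janet_completion_exists_unique_general n M
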